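/- A finite simple connected loopless graph G is resistance nonnegative (RN) if and only if there exists a point x in the relative interior P(G)° of the spanning tree polytope satisfying ∑_{u : uv ∈ E} x_{uv} ≤ 2 for every vertex v ∈ V. -/

import Mathlib

open scoped Classical

namespace RCurv

variable {V : Type*} [Fintype V] [DecidableEq V]

/-- `T` is (the edge set of) a spanning tree of `G`. -/
def IsSpanningTree (G : SimpleGraph V) (T : Finset (Sym2 V)) : Prop :=
  (T : Set (Sym2 V)) ⊆ G.edgeSet ∧ (SimpleGraph.fromEdgeSet (T : Set (Sym2 V))).IsTree

/-- The finite set of all spanning trees of `G`. -/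
noncomputable def spanningTrees (G : SimpleGraph V) : Finset (Finset (Sym2 V)) :=
  Finset.univ.filter fun T => IsSpanningTree G T

/-- The relative resistance `r_e(c)` of an edge `e`. -/
noncomputable def relRes (G : SimpleGraph V) (c : Sym2 V → ℝ) (e : Sym2 V) : ℝ :=
  (∑ T ∈ (spanningTrees G).filter (fun T => e ∈ T), ∏ t ∈ T, c t) /
    (∑ T ∈ spanningTrees G, ∏ t ∈ T, c t)

/-- The resistance curvature `p_v(c)` of a vertex `v`. -/
noncomputable def curv (G : SimpleGraph V) (c : Sym2 V → ℝ) (v : V) : ℝ :=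
  1 - (1 / 2) * ∑ u ∈ G.neighborFinset v, relRes G c s(u, v)

/-- `G` is resistance nonnegative. -/
def IsRN (G : SimpleGraph V) : Prop :=
  ∃ c : Sym2 V → ℝ, (∀ e ∈ G.edgeSet, 0 < c e) ∧ ∀ v : V, 0 ≤ curv G c v

/-- `G` is resistance positive. -/
def IsRP (G : SimpleGraph V) : Prop :=
  ∃ c : Sym2 V → ℝ, (∀ e ∈ G.edgeSet, 0 < c e) ∧ ∀ v : V, 0 < curv G c v

/-- The indicator vector of a finite edge set, as a vector in `ℝ^{Sym2 V}`. -/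
noncomputable def indVec (T : Finset (Sym2 V)) : Sym2 V → ℝ := fun e => if e ∈ T then 1 else 0

/-- The spanning tree polytope `P(G)`. -/
noncomputable def stPolytope (G : SimpleGraph V) : Set (Sym2 V → ℝ) :=
  convexHull ℝ {x | ∃ T ∈ spanningTrees G, x = indVec T}

/-- `M` is a matching of `G`. -/
def IsMatching' (G : SimpleGraph V) (M : Finset (Sym2 V)) : Prop :=
  (M : Set (Sym2 V)) ⊆ G.edgeSet ∧ ∀ v : V, (M.filter fun e => v ∈ e).card ≤ 1

/-- The matching polytope `M(G)`. -/
noncomputable def matchingPolytope (G : SimpleGraph V) : Set (Sym2 V → ℝ) :=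
  convexHull ℝ {x | ∃ M : Finset (Sym2 V), IsMatching' G M ∧ x = indVec M}

/-- A Hamiltonian path: a spanning tree in which every vertex has degree at most `2`. -/
def IsHamPath (G : SimpleGraph V) (H : Finset (Sym2 V)) : Prop :=
  IsSpanningTree G H ∧ ∀ v : V, (H.filter fun e => v ∈ e).card ≤ 2

end RCurv



noncomputable section

namespace RCurvAux

variable {α κ : Type*} [Fintype α] [Fintype κ]

def dotp (u v : α → ℝ) : ℝ := ∑ j, u j * v j

lemma dotp_add_left (u v w : α → ℝ) : dotp (u + v) w = dotp u w + dotp v w := by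
  simp [dotp, add_mul, Finset.sum_add_distrib]

lemma dotp_smul_left (t : ℝ) (u w : α → ℝ) : dotp (t • u) w = t * dotp u w := by
  simp [dotp, Finset.mul_sum, mul_assoc]

lemma dotp_sub_right (u v w : α → ℝ) : dotp u (v - w) = dotp u v - dotp u w := by
  simp [dotp, mul_sub, Finset.sum_sub_distrib]

lemma dotp_sum_right (u : α → ℝ) (f : κ → α → ℝ) :
    dotp u (∑ i, f i) = ∑ i, dotp u (f i) := by
  simp only [dotp, Finset.sum_apply, Finset.mul_sum]
  rw [Finset.sum_comm]

lemma dotp_smul_right (t : ℝ) (u w : α → ℝ) : dotp u (t • w) = t * dotp u w := by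
  simp [dotp, Finset.mul_sum, mul_left_comm]

lemma dotp_zero_left (w : α → ℝ) : dotp 0 w = 0 := by simp [dotp]

lemma dotp_self_nonneg (u : α → ℝ) : 0 ≤ dotp u u :=
  Finset.sum_nonneg fun j _ => mul_self_nonneg _

lemma eq_zero_of_dotp_self (u : α → ℝ) (h : dotp u u = 0) : u = 0 := by
  funext j
  have h1 := (Finset.sum_eq_zero_iff_of_nonneg
    (fun j _ => mul_self_nonneg (u j))).mp h j (Finset.mem_univ j)
  simpa using mul_self_eq_zero.mp h1

lemma continuous_dotp_left (w : α → ℝ) : Continuous fun u : α → ℝ => dotp u w := by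
  unfold dotp
  exact continuous_finset_sum _ fun j _ => (continuous_apply j).mul continuous_const

def combo (b : κ → α → ℝ) : (κ → ℝ) →ₗ[ℝ] (α → ℝ) where
  toFun c := ∑ i, c i • b i
  map_add' c d := by simp [add_smul, Finset.sum_add_distrib]
  map_smul' r c := by simp [mul_smul, Finset.smul_sum]

lemma combo_apply (b : κ → α → ℝ) (c : κ → ℝ) : combo b c = ∑ i, c i • b i := rfl

lemma combo_mem_span (b : κ → α → ℝ) (c : κ → ℝ) :
    combo b c ∈ Submodule.span ℝ (Set.range b) :=
  Submodule.sum_mem _ fun i _ => Submodule.smul_mem _ _ (Submodule.subset_span ⟨i, rfl⟩)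

lemma range_combo (b : κ → α → ℝ) :
    LinearMap.range (combo b) = Submodule.span ℝ (Set.range b) := by
  apply le_antisymm
  · rintro y ⟨c, rfl⟩; exact combo_mem_span b c
  · rw [Submodule.span_le]
    rintro _ ⟨i, rfl⟩
    refine ⟨Pi.single i 1, ?_⟩
    rw [combo_apply, Finset.sum_eq_single i]
    · simp
    · intro j _ hj; simp [Pi.single_apply, hj]
    · intro h; exact absurd (Finset.mem_univ i) h

lemma span_shift_eq_direction (a : κ → α → ℝ) {x : α → ℝ}
    (hx : x ∈ affineSpan ℝ (Set.range a)) :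
    Submodule.span ℝ (Set.range fun i => a i - x) = (affineSpan ℝ (Set.range a)).direction := by
  apply le_antisymm
  · rw [Submodule.span_le]
    rintro _ ⟨i, rfl⟩
    have h := AffineSubspace.vsub_mem_direction
      (subset_affineSpan ℝ (Set.range a) ⟨i, rfl⟩) hx
    simpa [vsub_eq_sub] using h
  · rw [direction_affineSpan, vectorSpan_def, Submodule.span_le]
    rintro z hz
    rw [Set.mem_vsub] at hz
    obtain ⟨p, ⟨i, rfl⟩, q, ⟨j, rfl⟩, rfl⟩ := hz
    have : a i -ᵥ a j = (a i - x) - (a j - x) := by simp [vsub_eq_sub]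
    rw [this]
    exact sub_mem (Submodule.subset_span ⟨i, rfl⟩) (Submodule.subset_span ⟨j, rfl⟩)

lemma exists_rep_of_mem_hull {a : κ → α → ℝ} {y : α → ℝ}
    (hy : y ∈ convexHull ℝ (Set.range a)) :
    ∃ μ : κ → ℝ, (∀ i, 0 ≤ μ i) ∧ ∑ i, μ i = 1 ∧ ∑ i, μ i • a i = y := by
  rw [convexHull_range_eq_exists_affineCombination] at hy
  obtain ⟨s, w, h0, h1, hc⟩ := hy
  refine ⟨fun i => if i ∈ s then w i else 0, fun i => ?_, ?_, ?_⟩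
  · dsimp only
    split
    · exact h0 _ ‹_›
    · exact le_refl 0
  · dsimp only
    rw [Finset.sum_ite_mem, Finset.univ_inter]; exact h1
  · dsimp only
    rw [Finset.affineCombination_eq_linear_combination s a w h1] at hc
    rw [← hc]
    simp only [ite_smul, zero_smul]
    rw [Finset.sum_ite_mem, Finset.univ_inter]


theorem sum_smul_mem_intrinsicInterior (a : κ → α → ℝ) (w : κ → ℝ)
    (hw : ∀ i, 0 < w i) (hw1 : ∑ i, w i = 1) :
    ∑ i, w i • a i ∈ intrinsicInterior ℝ (convexHull ℝ (Set.range a)) := by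
  classical
  set s : Set (α → ℝ) := convexHull ℝ (Set.range a) with hs
  set x : α → ℝ := ∑ i, w i • a i with hxdef
  have hconv : Convex ℝ s := convex_convexHull ℝ _
  have hmem : ∀ i, a i ∈ s := fun i => subset_convexHull ℝ _ ⟨i, rfl⟩
  have hxs : x ∈ s := hconv.sum_mem (fun i _ => (hw i).le) hw1 (fun i _ => hmem i)
  have hxA : x ∈ affineSpan ℝ s := subset_affineSpan ℝ s hxs
  have hxA' : x ∈ affineSpan ℝ (Set.range a) := by
    rw [hs, affineSpan_convexHull] at hxA; exact hxA
  set b : κ → α → ℝ := fun i => a i - x with hb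
  have hWdir : Submodule.span ℝ (Set.range b) = (affineSpan ℝ s).direction := by
    rw [hs, affineSpan_convexHull]; exact span_shift_eq_direction a hxA'
  -- a right inverse for `combo b`
  have hcod : ∀ c : κ → ℝ, combo b c ∈ (affineSpan ℝ s).direction := fun c =>
    hWdir ▸ combo_mem_span b c
  set Φ' : (κ → ℝ) →ₗ[ℝ] (affineSpan ℝ s).direction :=
    (combo b).codRestrict _ hcod with hΦ'
  have hsurj : LinearMap.range Φ' = ⊤ := by
    rw [LinearMap.range_eq_top]
    rintro ⟨y, hy⟩
    rw [← hWdir, ← range_combo] at hy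
    obtain ⟨c, hc⟩ := hy
    exact ⟨c, Subtype.ext hc⟩
  obtain ⟨σ, hσ⟩ := Φ'.exists_rightInverse_of_surjective hsurj
  have hσ' : ∀ y : (affineSpan ℝ s).direction, combo b (σ y) = (y : α → ℝ) := by
    intro y
    have := congrArg Subtype.val (congrFun (congrArg DFunLike.coe hσ) y)
    exact this
  have hxAmem : x ∈ affineSpan ℝ s := hxA
  have hsub : ∀ y : affineSpan ℝ s, ((y : α → ℝ) - x) ∈ (affineSpan ℝ s).direction := fun y => by
    simpa [vsub_eq_sub] using AffineSubspace.vsub_mem_direction y.2 hxAmem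
  set F : affineSpan ℝ s → κ → ℝ := fun y i =>
    w i + σ ⟨(y : α → ℝ) - x, hsub y⟩ i - (∑ j, σ ⟨(y : α → ℝ) - x, hsub y⟩ j) * w i with hF
  have hGcont : Continuous fun y : affineSpan ℝ s => σ ⟨(y : α → ℝ) - x, hsub y⟩ :=
    σ.continuous_of_finiteDimensional.comp
      (Continuous.subtype_mk (continuous_subtype_val.sub continuous_const) _)
  have hFx : F ⟨x, hxA⟩ = w := by
    have h0 : (⟨((⟨x, hxA⟩ : affineSpan ℝ s) : α → ℝ) - x, hsub ⟨x, hxA⟩⟩ :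
        (affineSpan ℝ s).direction) = 0 := Subtype.ext (sub_self x)
    funext i
    simp only [hF, h0, map_zero, Pi.zero_apply, Finset.sum_const_zero, zero_mul, add_zero,
      sub_zero]
  set U : Set (affineSpan ℝ s) := {y | ∀ i, 0 < F y i} with hU
  have hUopen : IsOpen U := by
    have hiff : U = ⋂ i, {y | 0 < F y i} := by
      ext y; simp [hU, Set.mem_iInter]
    rw [hiff]
    refine isOpen_iInter_of_finite fun i => ?_
    have hci : Continuous fun y => F y i := by
      refine Continuous.sub ?_ ?_
      · exact continuous_const.add ((continuous_apply i).comp hGcont)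
      · exact (continuous_finset_sum _ fun j _ => (continuous_apply j).comp hGcont).mul
          continuous_const
    exact isOpen_lt continuous_const hci
  have hUx : (⟨x, hxA⟩ : affineSpan ℝ s) ∈ U := fun i => by rw [hFx]; exact hw i
  have hUsub : U ⊆ Subtype.val ⁻¹' s := by
    intro y hy
    set t : κ → ℝ := σ ⟨(y : α → ℝ) - x, hsub y⟩ with hT
    have hΦt : combo b t = (y : α → ℝ) - x := hσ' _
    have hsum : ∑ i, F y i = 1 := by
      simp only [hF]
      rw [Finset.sum_sub_distrib, Finset.sum_add_distrib, ← Finset.mul_sum, hw1]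
      ring
    have h1 : ∑ i, t i • a i = ((y : α → ℝ) - x) + (∑ j, t j) • x := by
      have he : ∀ i, t i • a i = t i • b i + t i • x := fun i => by
        rw [hb]; dsimp only; rw [smul_sub]; abel
      have hsm : ∑ i : κ, t i • x = (∑ j : κ, t j) • x := Finset.sum_smul.symm
      rw [Finset.sum_congr rfl fun i _ => he i, Finset.sum_add_distrib, hsm,
        ← combo_apply, hΦt]
    have hcombo : ∑ i, F y i • a i = (y : α → ℝ) := by
      have he2 : ∀ i, F y i • a i
          = w i • a i + t i • a i - (∑ j, t j) • (w i • a i) := fun i => by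
        simp only [hF, ← hT]
        rw [sub_smul, add_smul, smul_smul]
      rw [Finset.sum_congr rfl fun i _ => he2 i, Finset.sum_sub_distrib,
        Finset.sum_add_distrib, ← Finset.smul_sum, h1, ← hxdef]
      abel
    have : ∑ i, F y i • a i ∈ s :=
      hconv.sum_mem (fun i _ => (hy i).le) hsum (fun i _ => hmem i)
    rwa [hcombo] at this
  exact ⟨⟨x, hxA⟩, mem_interior.mpr ⟨U, hUsub, hUopen, hUx⟩, rfl⟩


theorem exists_dotp_pos_of_mem_intrinsicInterior (a : κ → α → ℝ) {x u : α → ℝ}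
    (hx : x ∈ intrinsicInterior ℝ (convexHull ℝ (Set.range a)))
    (hu : u ∈ Submodule.span ℝ (Set.range fun i => a i - x)) (hune : u ≠ 0) :
    ∃ i, 0 < dotp u (a i - x) := by
  by_contra hcon
  push_neg at hcon
  set s : Set (α → ℝ) := convexHull ℝ (Set.range a) with hs
  have hxs : x ∈ s := intrinsicInterior_subset hx
  have hxA : x ∈ affineSpan ℝ s := subset_affineSpan ℝ s hxs
  have hxA' : x ∈ affineSpan ℝ (Set.range a) := by
    rw [hs, affineSpan_convexHull] at hxA; exact hxA
  have hu' : u ∈ (affineSpan ℝ s).direction := by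
    rw [hs, affineSpan_convexHull, ← span_shift_eq_direction a hxA']; exact hu
  obtain ⟨xh, hxint, hxval⟩ := hx
  have hmemA : ∀ t : ℝ, x + t • u ∈ affineSpan ℝ s := fun t => by
    have h := AffineSubspace.vadd_mem_of_mem_direction
      (Submodule.smul_mem _ t hu') hxA
    simpa [vadd_eq_add, add_comm] using h
  set γ : ℝ → affineSpan ℝ s := fun t => ⟨x + t • u, hmemA t⟩ with hγ
  have hγcont : Continuous γ :=
    Continuous.subtype_mk (continuous_const.add ((continuous_id (X := ℝ)).smul
      continuous_const)) _
  have hγ0 : γ 0 = xh := Subtype.ext (by simp [hγ, hxval])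
  have hnhds : γ ⁻¹' interior (Subtype.val ⁻¹' s) ∈ nhds (0 : ℝ) :=
    hγcont.continuousAt.preimage_mem_nhds (isOpen_interior.mem_nhds (by rw [hγ0]; exact hxint))
  obtain ⟨ε, hε, hball⟩ := Metric.mem_nhds_iff.mp hnhds
  have htmem : x + (ε / 2) • u ∈ s := by
    have hb2 : (ε / 2 : ℝ) ∈ Metric.ball (0 : ℝ) ε := by
      rw [Metric.mem_ball, Real.dist_eq, sub_zero, abs_of_pos (by positivity)]
      linarith
    have h3 : γ (ε / 2) ∈ Subtype.val ⁻¹' s := interior_subset (hball hb2)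
    exact h3
  obtain ⟨μ, hμ0, hμ1, hμc⟩ := exists_rep_of_mem_hull htmem
  have hdle : dotp u (x + (ε / 2) • u - x) ≤ 0 := by
    have h1 : x + (ε / 2) • u - x = ∑ i, μ i • (a i - x) := by
      have h2 : ∑ i, μ i • (a i - x) = (∑ i, μ i • a i) - (∑ i, μ i) • x := by
        have hsm : ∑ i : κ, μ i • x = (∑ j : κ, μ j) • x := Finset.sum_smul.symm
        rw [Finset.sum_congr rfl fun i (_ : i ∈ Finset.univ) => smul_sub (μ i) (a i) x,
          Finset.sum_sub_distrib, hsm]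
      rw [h2, hμ1, hμc, one_smul, add_sub_cancel_left]
    rw [h1, dotp_sum_right]
    refine Finset.sum_nonpos fun i _ => ?_
    rw [dotp_smul_right]
    exact mul_nonpos_iff.mpr (Or.inl ⟨hμ0 i, hcon i⟩)
  have hdgt : 0 < dotp u (x + (ε / 2) • u - x) := by
    rw [add_sub_cancel_left, dotp_smul_right]
    have hpos : 0 < dotp u u :=
      lt_of_le_of_ne (dotp_self_nonneg u) fun h => hune (eq_zero_of_dotp_self u h.symm)
    exact mul_pos (by positivity) hpos
  linarith

theorem exists_exp_param (a : κ → α → ℝ) {x : α → ℝ}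
    (hx : x ∈ intrinsicInterior ℝ (convexHull ℝ (Set.range a))) :
    ∃ θ : α → ℝ, ∀ e,
      ∑ i, Real.exp (dotp θ (a i)) / (∑ j, Real.exp (dotp θ (a j))) * a i e = x e := by
  classical
  haveI hne : Nonempty κ := by
    rcases isEmpty_or_nonempty κ with h | h
    · exfalso
      rw [Set.range_eq_empty a, convexHull_empty, intrinsicInterior_empty] at hx
      exact hx
    · exact h
  by_cases htriv : ∀ i, a i = x
  · refine ⟨0, fun e => ?_⟩
    have hzero : ∀ i : κ, dotp (0 : α → ℝ) (a i) = 0 := fun i => dotp_zero_left _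
    have hcard : (0 : ℝ) < (Fintype.card κ : ℝ) := by
      exact_mod_cast Fintype.card_pos
    have hzero' : dotp (0 : α → ℝ) x = 0 := dotp_zero_left _
    simp only [htriv, hzero', Real.exp_zero]
    have h1 : ∑ j : κ, (1 : ℝ) = (Fintype.card κ : ℝ) := by simp
    rw [h1, Finset.sum_const, Finset.card_univ, nsmul_eq_mul]
    field_simp
  · set b : κ → α → ℝ := fun i => a i - x with hb
    set W := Submodule.span ℝ (Set.range b) with hW
    obtain ⟨i₀, hi₀⟩ := not_forall.mp htriv
    have hbne : b i₀ ≠ 0 := fun h => hi₀ (by rwa [hb, sub_eq_zero] at h)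
    haveI : Nontrivial W := ⟨⟨⟨b i₀, Submodule.subset_span ⟨i₀, rfl⟩⟩, 0,
      fun h => hbne (by simpa using congrArg Subtype.val h)⟩⟩
    haveI : ProperSpace W := FiniteDimensional.proper ℝ W
    set g : W → ℝ := fun θ => Real.log (∑ i, Real.exp (dotp (θ : α → ℝ) (b i))) with hg
    have hsumpos : ∀ θ : W, 0 < ∑ i, Real.exp (dotp (θ : α → ℝ) (b i)) := fun θ =>
      Finset.sum_pos (fun i _ => Real.exp_pos _) Finset.univ_nonempty
    have hgcont : Continuous g := by
      refine Continuous.log ?_ fun θ => (hsumpos θ).ne'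
      exact continuous_finset_sum _ fun i _ =>
        Real.continuous_exp.comp ((continuous_dotp_left (b i)).comp continuous_subtype_val)
    set m : W → ℝ := fun θ =>
      Finset.univ.sup' Finset.univ_nonempty (fun i => dotp (θ : α → ℝ) (b i)) with hm
    have hmg : ∀ θ, m θ ≤ g θ := by
      intro θ
      rw [hg]
      rw [Real.le_log_iff_exp_le (hsumpos θ)]
      obtain ⟨i, _, hi⟩ := Finset.exists_mem_eq_sup' (Finset.univ_nonempty)
        (fun i => dotp (θ : α → ℝ) (b i))
      rw [hm]
      dsimp only
      rw [hi]
      exact Finset.single_le_sum (f := fun i => Real.exp (dotp (θ : α → ℝ) (b i)))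
        (fun i _ => (Real.exp_pos _).le) (Finset.mem_univ i)
    have hmcont : Continuous m := by
      refine Continuous.finset_sup'_apply Finset.univ_nonempty fun i _ => ?_
      exact (continuous_dotp_left (b i)).comp continuous_subtype_val
    obtain ⟨θs, hθsmem, hθsmin⟩ := (isCompact_sphere (0 : W) 1).exists_isMinOn
      (NormedSpace.sphere_nonempty.mpr zero_le_one) hmcont.continuousOn
    have hδpos : 0 < m θs := by
      have hne0 : (θs : α → ℝ) ≠ 0 := by
        intro h
        have h1 : θs = 0 := Subtype.ext h
        rw [h1] at hθsmem
        simp at hθsmem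
      obtain ⟨i, hi⟩ := exists_dotp_pos_of_mem_intrinsicInterior a hx
        (show _ ∈ _ from θs.2) hne0
      have hi' : 0 < dotp (θs : α → ℝ) (b i) := hi
      rw [hm]
      dsimp only
      exact lt_of_lt_of_le hi'
        (Finset.le_sup' (fun i => dotp (θs : α → ℝ) (b i)) (Finset.mem_univ i))
    have hlin : ∀ θ : W, m θs * ‖θ‖ ≤ g θ := by
      intro θ
      refine le_trans ?_ (hmg θ)
      rcases eq_or_ne θ 0 with rfl | hθ0
      · have : m 0 = 0 := by
          rw [hm]
          dsimp only
          have : ∀ i : κ, dotp ((0 : W) : α → ℝ) (b i) = 0 := fun i => by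
            rw [Submodule.coe_zero]; exact dotp_zero_left _
          simp only [this]
          exact Finset.sup'_const _ 0
        rw [this, norm_zero, mul_zero]
      · have hnorm : 0 < ‖θ‖ := norm_pos_iff.mpr hθ0
        set θ' : W := ‖θ‖⁻¹ • θ with hθ'
        have hsph : θ' ∈ Metric.sphere (0 : W) 1 := by
          have hcoe' : ((θ' : W) : α → ℝ) = ‖θ‖⁻¹ • ((θ : W) : α → ℝ) := by
            rw [hθ', Submodule.coe_smul]
          have hn1 : ‖θ'‖ = 1 := by
            show ‖((θ' : W) : α → ℝ)‖ = 1
            rw [hcoe', norm_smul, Real.norm_eq_abs, abs_inv, abs_norm]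
            exact inv_mul_cancel₀ hnorm.ne'
          simpa [Metric.mem_sphere] using hn1
        have hδ' : m θs ≤ m θ' := hθsmin hsph
        obtain ⟨i, _, hi⟩ := Finset.exists_mem_eq_sup' (Finset.univ_nonempty)
          (fun i => dotp (θ' : α → ℝ) (b i))
        have hcoe : (θ' : α → ℝ) = ‖θ‖⁻¹ • (θ : α → ℝ) := by rw [hθ', Submodule.coe_smul]
        have hmθ' : m θ' = ‖θ‖⁻¹ * dotp (θ : α → ℝ) (b i) := by
          rw [hm]; dsimp only; rw [hi, hcoe, dotp_smul_left]
        have h2 : m θs * ‖θ‖ ≤ dotp (θ : α → ℝ) (b i) := by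
          have h3 := mul_le_mul_of_nonneg_right (hδ'.trans_eq hmθ') hnorm.le
          rwa [mul_comm (‖θ‖⁻¹) _, mul_assoc, inv_mul_cancel₀ hnorm.ne', mul_one] at h3
        rw [hm]
        dsimp only
        exact h2.trans
          (Finset.le_sup' (fun i => dotp (θ : α → ℝ) (b i)) (Finset.mem_univ i))
    have hcoer : Filter.Tendsto g (Filter.cocompact W) Filter.atTop := by
      have h1 : Filter.Tendsto (fun θ : W => ‖θ‖) (Filter.cocompact W) Filter.atTop :=
        tendsto_norm_cocompact_atTop
      exact Filter.tendsto_atTop_mono hlin (h1.const_mul_atTop' hδpos)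
    obtain ⟨θ₀, hθ₀⟩ := hgcont.exists_forall_le hcoer
    have hgrad : ∀ u : W,
        ∑ i, dotp (u : α → ℝ) (b i) * Real.exp (dotp ((θ₀ : W) : α → ℝ) (b i)) = 0 := by
      intro u
      set d : κ → ℝ := fun i => dotp ((θ₀ : W) : α → ℝ) (b i) with hd
      set ee : κ → ℝ := fun i => dotp ((u : W) : α → ℝ) (b i) with hee
      set h : ℝ → ℝ := fun t => Real.log (∑ i, Real.exp (d i + t * ee i)) with hh
      have hgt : ∀ t, h t = g (θ₀ + t • u) := by
        intro t
        rw [hh, hg]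
        dsimp only
        congr 1
        refine Finset.sum_congr rfl fun i _ => ?_
        congr 1
        rw [hd, hee]
        dsimp only
        rw [← dotp_smul_left t, ← dotp_add_left, ← Submodule.coe_smul, ← Submodule.coe_add]
      have hlocmin : IsLocalMin h 0 := Filter.Eventually.of_forall fun t => by
        rw [hgt t, hgt 0]
        simpa using hθ₀ (θ₀ + t • u)
      have hsum0 : 0 < ∑ i, Real.exp (d i + 0 * ee i) :=
        Finset.sum_pos (fun _ _ => Real.exp_pos _) Finset.univ_nonempty
      have hd1 : HasDerivAt (fun t => ∑ i, Real.exp (d i + t * ee i))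
          (∑ i, Real.exp (d i + 0 * ee i) * ee i) 0 := by
        refine HasDerivAt.fun_sum fun i _ => ?_
        have hinner : HasDerivAt (fun t : ℝ => d i + t * ee i) (ee i) 0 := by
          simpa using (hasDerivAt_mul_const (ee i)).const_add (d i)
        exact hinner.exp
      have hd2 : HasDerivAt h
          ((∑ i, Real.exp (d i + 0 * ee i) * ee i) / ∑ i, Real.exp (d i + 0 * ee i)) 0 :=
        hd1.log hsum0.ne'
      have hzero := hlocmin.hasDerivAt_eq_zero hd2
      have hnum : ∑ i, Real.exp (d i + 0 * ee i) * ee i = 0 := by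
        rcases div_eq_zero_iff.mp hzero with h' | h'
        · exact h'
        · exact absurd h' hsum0.ne'
      calc ∑ i, ee i * Real.exp (d i) = ∑ i, Real.exp (d i + 0 * ee i) * ee i := by
            refine Finset.sum_congr rfl fun i _ => ?_
            rw [zero_mul, add_zero, mul_comm]
        _ = 0 := hnum
    set q : κ → ℝ := fun i => Real.exp (dotp ((θ₀ : W) : α → ℝ) (b i)) with hq
    set y : α → ℝ := ∑ i, q i • b i with hy
    have hyW : y ∈ W :=
      Submodule.sum_mem _ fun i _ => Submodule.smul_mem _ _ (Submodule.subset_span ⟨i, rfl⟩)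
    have hy0 : y = 0 := by
      apply eq_zero_of_dotp_self
      have hgr := hgrad ⟨y, hyW⟩
      have h1 : dotp y y = ∑ i, q i * dotp y (b i) := by
        calc dotp y y = dotp y (∑ i, q i • b i) := by rw [← hy]
          _ = ∑ i, dotp y (q i • b i) := dotp_sum_right _ _
          _ = ∑ i, q i * dotp y (b i) := Finset.sum_congr rfl fun i _ => dotp_smul_right _ _ _
      rw [h1]
      rw [← hgr]
      exact Finset.sum_congr rfl fun i _ => by rw [mul_comm]
    refine ⟨((θ₀ : W) : α → ℝ), fun e => ?_⟩
    set θ : α → ℝ := ((θ₀ : W) : α → ℝ)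
    have hq' : ∀ i, q i = Real.exp (dotp θ (a i)) / Real.exp (dotp θ x) := fun i => by
      rw [hq]
      dsimp only
      rw [hb]
      dsimp only
      rw [dotp_sub_right, Real.exp_sub]
    have hyE : ∑ i, q i * a i e = (∑ i, q i) * x e := by
      have h0 : (∑ i, q i • b i) e = 0 := by rw [← hy, hy0]; rfl
      have h1 : ∑ i, q i * (a i e - x e) = 0 := by
        rw [← h0, Finset.sum_apply]
        exact Finset.sum_congr rfl fun i _ => by rw [hb]; dsimp only; rw [Pi.smul_apply,
          Pi.sub_apply, smul_eq_mul]
      have h2 : ∑ i, (q i * a i e - q i * x e) = 0 := by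
        rw [← h1]; exact Finset.sum_congr rfl fun i _ => by ring
      rw [Finset.sum_sub_distrib, ← Finset.sum_mul] at h2
      linarith
    have hE0 : (0 : ℝ) < Real.exp (dotp θ x) := Real.exp_pos _
    have hQpos : (0 : ℝ) < ∑ j, Real.exp (dotp θ (a j)) :=
      Finset.sum_pos (fun _ _ => Real.exp_pos _) Finset.univ_nonempty
    have hnum : ∑ i, Real.exp (dotp θ (a i)) * a i e = (∑ j, Real.exp (dotp θ (a j))) * x e := by
      have h1 := hyE
      have h2 : ∀ i, q i * a i e = Real.exp (dotp θ (a i)) * a i e / Real.exp (dotp θ x) :=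
        fun i => by rw [hq' i]; ring
      have h3 : ∑ i, q i = (∑ j, Real.exp (dotp θ (a j))) / Real.exp (dotp θ x) := by
        rw [Finset.sum_div]
        exact Finset.sum_congr rfl fun i _ => hq' i
      rw [Finset.sum_congr rfl fun i _ => h2 i, ← Finset.sum_div, h3] at h1
      field_simp at h1
      linarith
    calc ∑ i, Real.exp (dotp θ (a i)) / (∑ j, Real.exp (dotp θ (a j))) * a i e
        = (∑ i, Real.exp (dotp θ (a i)) * a i e) / ∑ j, Real.exp (dotp θ (a j)) := by
          rw [Finset.sum_div]
          exact Finset.sum_congr rfl fun i _ => by ring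
      _ = x e := by rw [hnum, mul_comm, mul_div_assoc, div_self hQpos.ne', mul_one]

end RCurvAux

namespace RCurv

variable {V : Type*} [Fintype V] [DecidableEq V]

lemma mem_spanningTrees_iff {G : SimpleGraph V} {T : Finset (Sym2 V)} :
    T ∈ spanningTrees G ↔ IsSpanningTree G T := by
  unfold spanningTrees
  simp [Finset.mem_filter]

lemma spanningTrees_nonempty_of_acyclic {G : SimpleGraph V} (hG : G.Connected)
    (hac : G.IsAcyclic) : (spanningTrees G).Nonempty := by
  classical
  haveI : Fintype G.edgeSet := Fintype.ofFinite _
  refine ⟨G.edgeFinset, ?_⟩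
  rw [spanningTrees, Finset.mem_filter]
  refine ⟨Finset.mem_univ _, (G.coe_edgeFinset).subset.trans subset_rfl, ?_⟩
  rw [SimpleGraph.coe_edgeFinset, SimpleGraph.fromEdgeSet_edgeSet]
  exact ⟨hG, hac⟩

lemma spanningTrees_nonempty {G : SimpleGraph V} (hG : G.Connected) :
    (spanningTrees G).Nonempty := by
  classical
  obtain ⟨n, hn⟩ : ∃ n, G.edgeSet.ncard ≤ n := ⟨_, le_rfl⟩
  induction n generalizing G with
  | zero =>
    have h0 : G.edgeSet.ncard = 0 := by omega
    have hempty : G.edgeSet = ∅ := (Set.ncard_eq_zero G.edgeSet.toFinite).mp h0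
    have hac : G.IsAcyclic := by
      intro v c hc
      obtain ⟨e, he⟩ := List.exists_mem_of_ne_nil c.edges (by
        intro h
        have h3 := hc.three_le_length
        rw [← SimpleGraph.Walk.length_edges, h] at h3
        simp at h3)
      have hmem := c.edges_subset_edgeSet he
      rw [hempty] at hmem
      exact hmem
    exact spanningTrees_nonempty_of_acyclic hG hac
  | succ n ih =>
    by_cases hac : G.IsAcyclic
    · exact spanningTrees_nonempty_of_acyclic hG hac
    · unfold SimpleGraph.IsAcyclic at hac
      push_neg at hac
      obtain ⟨v, c, hc⟩ := hac
      have hnenil : c.edges ≠ [] := by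
        intro h
        have h3 := hc.three_le_length
        rw [← SimpleGraph.Walk.length_edges, h] at h3
        simp at h3
      obtain ⟨e, he⟩ := List.exists_mem_of_ne_nil c.edges hnenil
      revert he
      induction e using Sym2.ind with
      | _ a b =>
      intro he
      obtain ⟨hadj, hreach⟩ :=
        SimpleGraph.adj_and_reachable_delete_edges_iff_exists_cycle.mpr ⟨v, c, hc, he⟩
      set G' := G \ SimpleGraph.fromEdgeSet {s(a, b)} with hG'
      have hstep : ∀ {u w : V}, G.Adj u w → G'.Reachable u w := by
        intro u w huw
        by_cases hcase : s(u, w) = s(a, b)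
        · rw [Sym2.eq_iff] at hcase
          rcases hcase with ⟨rfl, rfl⟩ | ⟨rfl, rfl⟩
          · exact hreach
          · exact hreach.symm
        · refine SimpleGraph.Adj.reachable ?_
          rw [hG', SimpleGraph.sdiff_adj]
          refine ⟨huw, ?_⟩
          rw [SimpleGraph.fromEdgeSet_adj]
          rintro ⟨hmem, -⟩
          exact hcase (Set.mem_singleton_iff.mp hmem)
      have hG'conn : G'.Connected := by
        rw [SimpleGraph.connected_iff]
        refine ⟨?_, hG.nonempty⟩
        intro u w
        obtain ⟨p⟩ := hG.preconnected u w
        induction p with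
        | nil => exact SimpleGraph.Reachable.refl _
        | cons h p ih' => exact (hstep h).trans ih'
      have hlt : G'.edgeSet.ncard < G.edgeSet.ncard := by
        refine Set.ncard_lt_ncard ?_ G.edgeSet.toFinite
        rw [Set.ssubset_iff_of_subset (SimpleGraph.edgeSet_mono sdiff_le)]
        refine ⟨s(a, b), hadj, ?_⟩
        rw [SimpleGraph.mem_edgeSet, SimpleGraph.sdiff_adj]
        rintro ⟨-, hnot⟩
        exact hnot ((SimpleGraph.fromEdgeSet_adj _).mpr ⟨Set.mem_singleton _, hadj.ne⟩)
      obtain ⟨T, hT⟩ := ih hG'conn (by omega)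
      refine ⟨T, ?_⟩
      rw [spanningTrees, Finset.mem_filter] at hT ⊢
      exact ⟨Finset.mem_univ _, hT.2.1.trans (SimpleGraph.edgeSet_mono sdiff_le), hT.2.2⟩

end RCurv

open RCurv in
/-- A graph is resistance nonnegative iff some point of the relative interior of the spanning
tree polytope satisfies the vertex inequalities `∑_{u : uv ∈ E} x_{uv} ≤ 2`. -/
theorem isRN_iff_exists_point_halfspaces {V : Type*} [Fintype V] [DecidableEq V]
    (G : SimpleGraph V) (hG : G.Connected) :
    IsRN G ↔
      ∃ x ∈ intrinsicInterior ℝ (stPolytope G),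
        ∀ v : V, ∑ u ∈ G.neighborFinset v, x s(u, v) ≤ 2 := by
  classical
  have hSne : (spanningTrees G).Nonempty := spanningTrees_nonempty hG
  haveI hκ : Nonempty {T // T ∈ spanningTrees G} := ⟨⟨hSne.choose, hSne.choose_spec⟩⟩
  set a : {T // T ∈ spanningTrees G} → Sym2 V → ℝ := fun i => indVec i.1 with ha
  have hset : {x | ∃ T ∈ spanningTrees G, x = indVec T} = Set.range a := by
    ext y
    constructor
    · rintro ⟨T, hT, rfl⟩; exact ⟨⟨T, hT⟩, rfl⟩
    · rintro ⟨i, rfl⟩; exact ⟨i.1, i.2, rfl⟩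
  have hPol : stPolytope G = convexHull ℝ (Set.range a) := by rw [stPolytope, hset]
  have hrel : ∀ (c : Sym2 V → ℝ) (e : Sym2 V),
      relRes G c e = (∑ i : {T // T ∈ spanningTrees G}, (∏ t ∈ i.1, c t) * a i e) /
        (∑ i : {T // T ∈ spanningTrees G}, ∏ t ∈ i.1, c t) := by
    intro c e
    simp only [relRes]
    congr 1
    · rw [Finset.sum_filter,
        ← Finset.sum_coe_sort (spanningTrees G) (fun T => if e ∈ T then ∏ t ∈ T, c t else 0)]
      refine Finset.sum_congr rfl fun i _ => ?_
      rw [ha]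
      dsimp only
      simp only [indVec]
      split <;> simp
    · rw [← Finset.sum_coe_sort (spanningTrees G) (fun T => ∏ t ∈ T, c t)]
  constructor
  · rintro ⟨c, hcpos, hcurv⟩
    set w : {T // T ∈ spanningTrees G} → ℝ := fun i => ∏ t ∈ i.1, c t with hw
    have hwpos : ∀ i, 0 < w i := by
      intro i
      refine Finset.prod_pos fun t ht => hcpos t ?_
      exact (mem_spanningTrees_iff.mp i.2).1 ht
    have hZpos : 0 < ∑ j, w j := Finset.sum_pos (fun i _ => hwpos i) Finset.univ_nonempty
    set x : Sym2 V → ℝ := fun e => relRes G c e with hx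
    have hxeq : x = ∑ i, (w i / ∑ j, w j) • a i := by
      funext e
      rw [Finset.sum_apply, hx]
      dsimp only
      rw [hrel c e, Finset.sum_div]
      refine Finset.sum_congr rfl fun i _ => ?_
      rw [Pi.smul_apply, smul_eq_mul, hw]
      ring
    refine ⟨x, ?_, ?_⟩
    · rw [hPol, hxeq]
      exact RCurvAux.sum_smul_mem_intrinsicInterior a _ (fun i => div_pos (hwpos i) hZpos)
        (by rw [← Finset.sum_div, div_self hZpos.ne'])
    · intro v
      have h := hcurv v
      simp only [curv] at h
      have h2 : ∑ u ∈ G.neighborFinset v, relRes G c s(u, v) ≤ 2 := by linarith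
      rw [hx]
      exact h2
  · rintro ⟨x, hx, hineq⟩
    rw [hPol] at hx
    obtain ⟨θ, hθ⟩ := RCurvAux.exists_exp_param a hx
    refine ⟨fun e => Real.exp (θ e), fun e _ => Real.exp_pos _, ?_⟩
    have hkey : ∀ i : {T // T ∈ spanningTrees G}, ∏ t ∈ i.1, Real.exp (θ t)
        = Real.exp (RCurvAux.dotp θ (a i)) := by
      intro i
      rw [← Real.exp_sum]
      congr 1
      rw [RCurvAux.dotp, ha]
      dsimp only
      simp only [indVec, mul_ite, mul_one, mul_zero]
      rw [Finset.sum_ite_mem, Finset.univ_inter]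
    have hrelx : ∀ e, relRes G (fun e => Real.exp (θ e)) e = x e := by
      intro e
      rw [hrel]
      simp only [hkey]
      rw [← hθ e, Finset.sum_div]
      exact Finset.sum_congr rfl fun i _ => by ring
    intro v
    simp only [curv]
    have hs : ∑ u ∈ G.neighborFinset v, relRes G (fun e => Real.exp (θ e)) s(u, v)
        = ∑ u ∈ G.neighborFinset v, x s(u, v) :=
      Finset.sum_congr rfl fun u _ => hrelx _
    rw [hs]
    have := hineq v
    linarith
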